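/- For every positive integer q there exists a tree T that is γ-q-critical. -/

import Mathlib

open SimpleGraph

/-- `D` is a dominating set of `G`. -/
def SimpleGraph.IsDomSet {V : Type*} (G : SimpleGraph V) (D : Set V) : Prop :=
  ∀ v ∉ D, ∃ u ∈ D, G.Adj u v

/-- The domination number of `G`. -/
noncomputable def SimpleGraph.domNum {V : Type*} [Fintype V] (G : SimpleGraph V) : ℕ :=
  sInf {k | ∃ D : Finset V, D.card = k ∧ G.IsDomSet ↑D}

/-- The graph obtained from `G` by subdividing each edge in `F` once: each `e ∈ F`
contributes a new vertex adjacent to the two endpoints of `e`, and the edges of `F`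
are removed. -/
def SimpleGraph.subdiv {V : Type*} (G : SimpleGraph V) (F : Finset (Sym2 V)) :
    SimpleGraph (V ⊕ {e : Sym2 V // e ∈ F}) :=
  SimpleGraph.fromRel (fun a b => match a, b with
    | Sum.inl u, Sum.inl v => G.Adj u v ∧ s(u, v) ∉ F
    | Sum.inl u, Sum.inr e => u ∈ (e : Sym2 V)
    | _, _ => False)

/-- `G` is `γ`-`q`-critical: subdividing any `q` edges increases the domination number,
while some set of `q - 1` edges can be subdivided without increasing it. -/
def SimpleGraph.IsQCritical {V : Type*} [Fintype V] (G : SimpleGraph V) (q : ℕ) : Prop :=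
  (∀ F : Finset (Sym2 V), ↑F ⊆ G.edgeSet → F.card = q →
      G.domNum < (G.subdiv F).domNum) ∧
  (∃ F : Finset (Sym2 V), ↑F ⊆ G.edgeSet ∧ F.card = q - 1 ∧
      (G.subdiv F).domNum = G.domNum)

/-!
The witness is the spider: `q` paths of length two glued at a centre. Its `q` middle vertices
dominate it and its `q` leaves have pairwise disjoint closed neighbourhoods, so `γ = q`.
Subdividing the inner edges of all legs but one keeps the middle vertices dominating, and
subdivision never lowers `γ`. If `q` edges are subdivided, either some leg has both edges
subdivided, and the new vertex on its inner edge joins the leaves in a packing of size `q + 1`,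
or every leg has one subdivided edge, and the centre does.
-/

open Function

namespace SimpleGraph

variable {V : Type*} (G : SimpleGraph V)

def closedNeighborSet (v : V) : Set V := insert v (G.neighborSet v)

variable {G}

@[simp]
lemma mem_closedNeighborSet {v w : V} : w ∈ G.closedNeighborSet v ↔ w = v ∨ G.Adj v w :=
  Iff.rfl

lemma isDomSet_iff_forall_exists_mem_closedNeighborSet {D : Set V} :
    G.IsDomSet D ↔ ∀ v, ∃ u ∈ D, u ∈ G.closedNeighborSet v := by
  refine ⟨fun hD v => ?_, fun hD v hv => ?_⟩
  · by_cases hv : v ∈ D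
    · exact ⟨v, hv, Or.inl rfl⟩
    · obtain ⟨u, hu, huv⟩ := hD v hv
      exact ⟨u, hu, Or.inr huv.symm⟩
  · obtain ⟨u, hu, rfl | hvu⟩ := hD v
    · exact absurd hu hv
    · exact ⟨u, hu, hvu.symm⟩

lemma disjoint_closedNeighborSet {u v : V} (huv : u ≠ v) (hadj : ¬ G.Adj u v)
    (hcommon : ∀ w, G.Adj u w → ¬ G.Adj v w) :
    Disjoint (G.closedNeighborSet u) (G.closedNeighborSet v) := by
  rw [Set.disjoint_left]
  rintro w (rfl | hw) (rfl | hw')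
  exacts [huv rfl, hadj hw'.symm, hadj hw, hcommon w hw hw']

section DomNum

variable [Fintype V]

lemma exists_isDomSet_card_eq_domNum : ∃ D : Finset V, D.card = G.domNum ∧ G.IsDomSet ↑D :=
  Nat.sInf_mem (s := {k | ∃ D : Finset V, D.card = k ∧ G.IsDomSet ↑D})
    ⟨_, Finset.univ, rfl, fun v hv => absurd (Finset.mem_coe.2 (Finset.mem_univ v)) hv⟩

lemma domNum_le_card {D : Finset V} (hD : G.IsDomSet ↑D) : G.domNum ≤ D.card :=
  Nat.sInf_le ⟨D, rfl, hD⟩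

lemma card_le_domNum_of_pairwise_disjoint {ι : Type*} [Fintype ι] {f : ι → V}
    (hf : Pairwise (Disjoint on G.closedNeighborSet ∘ f)) :
    Fintype.card ι ≤ G.domNum := by
  obtain ⟨D, hcard, hD⟩ := G.exists_isDomSet_card_eq_domNum
  rw [isDomSet_iff_forall_exists_mem_closedNeighborSet] at hD
  choose g hgD hgN using fun i => hD (f i)
  have hg : g.Injective := fun i j h => by
    by_contra hij
    exact Set.disjoint_left.1 (hf hij) (hgN i) (h ▸ hgN j)
  rw [← hcard, ← Finset.card_univ]
  exact Finset.card_le_card_of_injOn g (fun i _ => hgD i) hg.injOn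

end DomNum

section Subdiv

variable {F : Finset (Sym2 V)}

@[simp]
lemma subdiv_adj_inl_inl {u v : V} :
    (G.subdiv F).Adj (.inl u) (.inl v) ↔ G.Adj u v ∧ s(u, v) ∉ F := by
  simp only [subdiv, fromRel_adj, ne_eq, Sum.inl.injEq]
  constructor
  · rintro ⟨-, h | ⟨h, h'⟩⟩
    exacts [h, ⟨h.symm, Sym2.eq_swap (a := u) ▸ h'⟩]
  · exact fun h => ⟨h.1.ne, Or.inl h⟩

@[simp]
lemma subdiv_adj_inl_inr {u : V} {e : {e // e ∈ F}} :
    (G.subdiv F).Adj (.inl u) (.inr e) ↔ u ∈ (e : Sym2 V) := by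
  simp [subdiv]

@[simp]
lemma subdiv_adj_inr_inl {u : V} {e : {e // e ∈ F}} :
    (G.subdiv F).Adj (.inr e) (.inl u) ↔ u ∈ (e : Sym2 V) := by
  rw [adj_comm, subdiv_adj_inl_inr]

@[simp]
lemma subdiv_not_adj_inr_inr {e e' : {e // e ∈ F}} : ¬ (G.subdiv F).Adj (.inr e) (.inr e') := by
  simp [subdiv]

lemma mem_closedNeighborSet_of_mem_edge {e : Sym2 V} (he : e ∈ G.edgeSet) {v w : V}
    (hv : v ∈ e) (hw : w ∈ e) : w ∈ G.closedNeighborSet v := by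
  by_cases hwv : w = v
  · exact Or.inl hwv
  · exact Or.inr ((Sym2.mem_and_mem_iff (Ne.symm hwv)).1 ⟨hv, hw⟩ ▸ he :)

/-- Replace every subdivision vertex of a dominating set by an endpoint of its edge. -/
lemma domNum_le_domNum_subdiv [Fintype V] (hF : ↑F ⊆ G.edgeSet) :
    G.domNum ≤ (G.subdiv F).domNum := by
  classical
  obtain ⟨D, hcard, hD⟩ := (G.subdiv F).exists_isDomSet_card_eq_domNum
  rw [isDomSet_iff_forall_exists_mem_closedNeighborSet] at hD
  let π : V ⊕ {e // e ∈ F} → V := Sum.elim id fun e => e.1.out.1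
  refine (domNum_le_card (D := D.image π) ?_).trans (Finset.card_image_le.trans hcard.le)
  rw [isDomSet_iff_forall_exists_mem_closedNeighborSet]
  intro v
  obtain ⟨d, hd, hdv⟩ := hD (.inl v)
  refine ⟨π d, Finset.mem_image_of_mem π hd, ?_⟩
  rcases d with w | ⟨e, he⟩
  · simp only [mem_closedNeighborSet, Sum.inl.injEq, subdiv_adj_inl_inl] at hdv
    exact hdv.imp_right And.left
  · simp only [mem_closedNeighborSet, reduceCtorEq, subdiv_adj_inl_inr, false_or] at hdv
    exact mem_closedNeighborSet_of_mem_edge (hF he) hdv e.out_fst_mem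

lemma disjoint_closedNeighborSet_subdiv_inl (hF : ↑F ⊆ G.edgeSet) {u v : V} (huv : u ≠ v)
    (hadj : ¬ G.Adj u v)
    (hcommon : ∀ w, G.Adj u w → G.Adj v w → s(u, w) ∈ F ∨ s(v, w) ∈ F) :
    Disjoint ((G.subdiv F).closedNeighborSet (.inl u))
      ((G.subdiv F).closedNeighborSet (.inl v)) := by
  rw [Set.disjoint_left]
  rintro (w | ⟨e, he⟩) hu hv <;> simp only [mem_closedNeighborSet, Sum.inl.injEq,
    subdiv_adj_inl_inl, subdiv_adj_inl_inr, reduceCtorEq, false_or] at hu hv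
  · rcases hu with rfl | ⟨hu, huF⟩ <;> rcases hv with rfl | ⟨hv, hvF⟩
    exacts [huv rfl, hadj hv.symm, hadj hu, (hcommon w hu hv).elim huF hvF]
  · exact hadj (((Sym2.mem_and_mem_iff huv).1 ⟨hu, hv⟩) ▸ hF he :)

lemma disjoint_closedNeighborSet_subdiv_inr_inl {e : Sym2 V} (he : e ∈ F) {v : V}
    (hfar : ∀ w ∈ e, w ≠ v ∧ (G.Adj v w → s(v, w) ∈ F)) :
    Disjoint ((G.subdiv F).closedNeighborSet (.inr ⟨e, he⟩))
      ((G.subdiv F).closedNeighborSet (.inl v)) := by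
  rw [Set.disjoint_left]
  rintro (w | e') he' hv <;> simp only [mem_closedNeighborSet, Sum.inl.injEq,
    subdiv_adj_inl_inl, subdiv_adj_inl_inr, subdiv_adj_inr_inl, subdiv_not_adj_inr_inr,
    reduceCtorEq, false_or, or_false] at he' hv
  · obtain ⟨hwv, hF⟩ := hfar w he'
    rcases hv with rfl | ⟨hv, hvF⟩
    exacts [hwv rfl, hvF (hF hv)]
  · rw [Sum.inr.injEq] at he'
    subst he'
    exact (hfar v hv).1 rfl

end Subdiv

end SimpleGraph

namespace Spider

def center (q : ℕ) : Fin (2 * q + 1) := ⟨0, by omega⟩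

def mid {q : ℕ} (i : Fin q) : Fin (2 * q + 1) := ⟨2 * i + 1, by omega⟩

def leaf {q : ℕ} (i : Fin q) : Fin (2 * q + 1) := ⟨2 * i + 2, by omega⟩

def innerEdge {q : ℕ} (i : Fin q) : Sym2 (Fin (2 * q + 1)) := s(center q, mid i)

def outerEdge {q : ℕ} (i : Fin q) : Sym2 (Fin (2 * q + 1)) := s(mid i, leaf i)

def graph (q : ℕ) : SimpleGraph (Fin (2 * q + 1)) :=
  fromEdgeSet (Set.range innerEdge ∪ Set.range outerEdge)

variable {q : ℕ} {F : Finset (Sym2 (Fin (2 * q + 1)))}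

@[simp] lemma mid_inj {i j : Fin q} : mid i = mid j ↔ i = j := by
  simp [mid, Fin.ext_iff]

@[simp] lemma leaf_inj {i j : Fin q} : leaf i = leaf j ↔ i = j := by
  simp [leaf, Fin.ext_iff]

@[simp] lemma mid_ne_center {i : Fin q} : mid i ≠ center q := by
  simp [mid, center, Fin.ext_iff]

@[simp] lemma leaf_ne_center {i : Fin q} : leaf i ≠ center q := by
  simp [leaf, center, Fin.ext_iff]

@[simp] lemma leaf_ne_mid {i j : Fin q} : leaf i ≠ mid j := by
  simp only [leaf, mid, ne_eq, Fin.ext_iff]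
  omega

@[simp] lemma center_ne_mid {i : Fin q} : center q ≠ mid i := mid_ne_center.symm

@[simp] lemma center_ne_leaf {i : Fin q} : center q ≠ leaf i := leaf_ne_center.symm

@[simp] lemma mid_ne_leaf {i j : Fin q} : mid i ≠ leaf j := leaf_ne_mid.symm

lemma eq_center_or_mid_or_leaf (v : Fin (2 * q + 1)) :
    v = center q ∨ (∃ i, v = mid i) ∨ ∃ i, v = leaf i := by
  obtain ⟨n, hn⟩ := v
  rcases n with _ | n
  · exact Or.inl rfl
  · rcases Nat.even_or_odd' n with ⟨k, rfl | rfl⟩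
    · exact Or.inr (Or.inl ⟨⟨k, by omega⟩, rfl⟩)
    · exact Or.inr (Or.inr ⟨⟨k, by omega⟩, rfl⟩)

lemma innerEdge_injective : Function.Injective (innerEdge (q := q)) := fun i j h => by
  simpa [innerEdge] using h

lemma outerEdge_injective : Function.Injective (outerEdge (q := q)) := fun i j h => by
  simpa [outerEdge] using h

@[simp] lemma innerEdge_inj {i j : Fin q} : innerEdge i = innerEdge j ↔ i = j :=
  innerEdge_injective.eq_iff

@[simp] lemma outerEdge_inj {i j : Fin q} : outerEdge i = outerEdge j ↔ i = j :=
  outerEdge_injective.eq_iff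

@[simp] lemma innerEdge_ne_outerEdge {i j : Fin q} : innerEdge i ≠ outerEdge j := by
  simp [innerEdge, outerEdge]

lemma mem_edgeSet_graph {e : Sym2 (Fin (2 * q + 1))} :
    e ∈ (graph q).edgeSet ↔ ∃ i, e = innerEdge i ∨ e = outerEdge i := by
  simp only [graph, edgeSet_fromEdgeSet, Set.mem_sdiff, Set.mem_union, Set.mem_range]
  constructor
  · rintro ⟨⟨i, rfl⟩ | ⟨i, rfl⟩, -⟩
    exacts [⟨i, Or.inl rfl⟩, ⟨i, Or.inr rfl⟩]
  · rintro ⟨i, rfl | rfl⟩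
    · exact ⟨Or.inl ⟨i, rfl⟩, by simp [innerEdge]⟩
    · exact ⟨Or.inr ⟨i, rfl⟩, by simp [outerEdge]⟩

lemma graph_adj_leaf {i : Fin q} {v : Fin (2 * q + 1)} :
    (graph q).Adj (leaf i) v ↔ v = mid i := by
  rw [← mem_edgeSet, mem_edgeSet_graph]
  simp [innerEdge, outerEdge]

lemma graph_adj_mid_center (i : Fin q) : (graph q).Adj (mid i) (center q) := by
  rw [← mem_edgeSet, mem_edgeSet_graph]
  exact ⟨i, Or.inl Sym2.eq_swap⟩

lemma graph_adj_leaf_mid (i : Fin q) : (graph q).Adj (leaf i) (mid i) :=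
  graph_adj_leaf.2 rfl

lemma graph_connected : (graph q).Connected := by
  have reach : ∀ v, (graph q).Reachable v (center q) := by
    intro v
    rcases eq_center_or_mid_or_leaf v with rfl | ⟨i, rfl⟩ | ⟨i, rfl⟩
    · rfl
    · exact (graph_adj_mid_center i).reachable
    · exact (graph_adj_leaf_mid i).reachable.trans (graph_adj_mid_center i).reachable
  exact (connected_iff _).2 ⟨fun u v => (reach u).trans (reach v).symm, ⟨center q⟩⟩

lemma edgeSet_graph : (graph q).edgeSet = Set.range (Sum.elim innerEdge outerEdge) := by
  ext e
  simp [mem_edgeSet_graph, exists_or, eq_comm]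

lemma graph_isTree : (graph q).IsTree := by
  rw [isTree_iff_connected_and_card, edgeSet_graph, Nat.card_range_of_injective
    (innerEdge_injective.sumElim outerEdge_injective fun _ _ => innerEdge_ne_outerEdge)]
  exact ⟨graph_connected, by simp [two_mul]⟩

lemma not_graph_adj_leaf_center {i : Fin q} : ¬ (graph q).Adj (leaf i) (center q) := by
  simp [graph_adj_leaf]

lemma pairwise_disjoint_closedNeighborSet_leaf :
    Pairwise (Disjoint on (graph q).closedNeighborSet ∘ leaf) := by
  intro i j hij
  refine disjoint_closedNeighborSet (by simpa using hij) (by simp [graph_adj_leaf]) ?_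
  intro w hi hj
  rw [graph_adj_leaf] at hi hj
  exact hij (mid_inj.1 (hi.symm.trans hj))

lemma pairwise_disjoint_closedNeighborSet_subdiv_leaf (hF : ↑F ⊆ (graph q).edgeSet) :
    Pairwise (Disjoint on ((graph q).subdiv F).closedNeighborSet ∘ Sum.inl ∘ leaf) := by
  intro i j hij
  refine disjoint_closedNeighborSet_subdiv_inl hF (by simpa using hij)
    (by simp [graph_adj_leaf]) fun w hi hj => ?_
  rw [graph_adj_leaf] at hi hj
  exact (hij (mid_inj.1 (hi.symm.trans hj))).elim

lemma disjoint_closedNeighborSet_subdiv_center_leaf (hF : ↑F ⊆ (graph q).edgeSet) {i : Fin q}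
    (hi : innerEdge i ∈ F ∨ outerEdge i ∈ F) :
    Disjoint (((graph q).subdiv F).closedNeighborSet (.inl (center q)))
      (((graph q).subdiv F).closedNeighborSet (.inl (leaf i))) := by
  refine disjoint_closedNeighborSet_subdiv_inl hF center_ne_leaf
    (fun h => not_graph_adj_leaf_center h.symm) fun w _ hw => ?_
  rw [graph_adj_leaf] at hw
  subst hw
  simpa [innerEdge, outerEdge, Sym2.eq_swap] using hi

lemma disjoint_closedNeighborSet_subdiv_innerEdge_leaf {j : Fin q} (hj : innerEdge j ∈ F)
    (hj' : outerEdge j ∈ F) (i : Fin q) :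
    Disjoint (((graph q).subdiv F).closedNeighborSet (.inr ⟨innerEdge j, hj⟩))
      (((graph q).subdiv F).closedNeighborSet (.inl (leaf i))) := by
  refine disjoint_closedNeighborSet_subdiv_inr_inl hj fun w hw => ?_
  rcases Sym2.mem_iff.1 hw with rfl | rfl
  · exact ⟨center_ne_leaf, fun h => (not_graph_adj_leaf_center h).elim⟩
  · refine ⟨mid_ne_leaf, fun h => ?_⟩
    rw [graph_adj_leaf, mid_inj] at h
    subst h
    simpa [outerEdge, Sym2.eq_swap] using hj'

lemma lt_domNum_subdiv_of_disjoint (hF : ↑F ⊆ (graph q).edgeSet) (p : Fin (2 * q + 1) ⊕ F)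
    (hp : ∀ i, Disjoint (((graph q).subdiv F).closedNeighborSet p)
      (((graph q).subdiv F).closedNeighborSet (.inl (leaf i)))) :
    q < ((graph q).subdiv F).domNum := by
  have h := ((graph q).subdiv F).card_le_domNum_of_pairwise_disjoint
    (f := fun o : Option (Fin q) => o.elim p (.inl ∘ leaf)) ?_
  · simpa using h
  rintro (_ | i) (_ | j) hij
  exacts [(hij rfl).elim, hp j, (hp i).symm,
    pairwise_disjoint_closedNeighborSet_subdiv_leaf hF (by simpa using hij)]

/-- Pigeonhole over the `q` legs. -/
lemma exists_leg_subset_or_forall_leg_meets (hF : ↑F ⊆ (graph q).edgeSet)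
    (hcard : F.card = q) :
    (∃ j, innerEdge j ∈ F ∧ outerEdge j ∈ F) ∨
      ∀ i, innerEdge i ∈ F ∨ outerEdge i ∈ F := by
  refine or_iff_not_imp_left.2 fun hboth => ?_
  push Not at hboth
  choose leg hleg using fun e (he : e ∈ F) => mem_edgeSet_graph.1 (hF he)
  have hinj : ∀ e e' he he', leg e he = leg e' he' → e = e' := by
    intro e e' he he' h
    rcases hleg e he with h₁ | h₁ <;> rcases hleg e' he' with h₂ | h₂ <;> rw [h] at h₁
    · exact h₁.trans h₂.symm
    · exact absurd (h₂ ▸ he') (hboth _ (h₁ ▸ he))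
    · exact absurd (h₁ ▸ he) (hboth _ (h₂ ▸ he'))
    · exact h₁.trans h₂.symm
  intro i
  obtain ⟨e, he, rfl⟩ := Finset.surj_on_of_inj_on_of_card_le leg
    (fun _ _ => Finset.mem_univ _) hinj (by simp [hcard]) i (Finset.mem_univ i)
  rcases hleg e he with h | h
  exacts [Or.inl (h ▸ he), Or.inr (h ▸ he)]

lemma lt_domNum_subdiv (hF : ↑F ⊆ (graph q).edgeSet) (hcard : F.card = q) :
    q < ((graph q).subdiv F).domNum := by
  rcases exists_leg_subset_or_forall_leg_meets hF hcard with ⟨j, hj, hj'⟩ | hmeets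
  · exact lt_domNum_subdiv_of_disjoint hF _
      (disjoint_closedNeighborSet_subdiv_innerEdge_leaf hj hj')
  · exact lt_domNum_subdiv_of_disjoint hF _
      fun i => disjoint_closedNeighborSet_subdiv_center_leaf hF (hmeets i)

def innerEdgesExcept (i₀ : Fin q) : Finset (Sym2 (Fin (2 * q + 1))) :=
  (Finset.univ.erase i₀).image innerEdge

lemma innerEdgesExcept_subset_edgeSet (i₀ : Fin q) :
    ↑(innerEdgesExcept i₀) ⊆ (graph q).edgeSet := by
  intro e he
  simp only [innerEdgesExcept, Finset.coe_image, Set.mem_image] at he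
  obtain ⟨i, -, rfl⟩ := he
  exact mem_edgeSet_graph.2 ⟨i, Or.inl rfl⟩

lemma card_innerEdgesExcept (i₀ : Fin q) : (innerEdgesExcept i₀).card = q - 1 := by
  simp [innerEdgesExcept, Finset.card_image_of_injective _ innerEdge_injective]

lemma domNum_subdiv_innerEdgesExcept_le (i₀ : Fin q) :
    ((graph q).subdiv (innerEdgesExcept i₀)).domNum ≤ q := by
  classical
  refine (domNum_le_card (D := Finset.univ.image (.inl ∘ mid)) ?_).trans
    (Finset.card_image_le.trans (by simp))
  rw [isDomSet_iff_forall_exists_mem_closedNeighborSet]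
  rintro (v | ⟨e, he⟩)
  · rcases eq_center_or_mid_or_leaf v with rfl | ⟨i, rfl⟩ | ⟨i, rfl⟩
    · refine ⟨.inl (mid i₀), by simp, Or.inr ?_⟩
      rw [mem_neighborSet, subdiv_adj_inl_inl]
      refine ⟨(graph_adj_mid_center i₀).symm, ?_⟩
      simp [innerEdgesExcept, innerEdge]
    · exact ⟨.inl (mid i), by simp, Or.inl rfl⟩
    · refine ⟨.inl (mid i), by simp, Or.inr ?_⟩
      rw [mem_neighborSet, subdiv_adj_inl_inl]
      refine ⟨graph_adj_leaf_mid i, ?_⟩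
      simp [innerEdgesExcept, innerEdge]
  · obtain ⟨i, -, rfl⟩ := Finset.mem_image.1 he
    exact ⟨.inl (mid i), by simp, Or.inr (by simp [innerEdge])⟩

lemma domNum_graph (hq : 0 < q) : (graph q).domNum = q := by
  have hle :=
    (graph q).card_le_domNum_of_pairwise_disjoint pairwise_disjoint_closedNeighborSet_leaf
  rw [Fintype.card_fin] at hle
  exact le_antisymm ((domNum_le_domNum_subdiv (innerEdgesExcept_subset_edgeSet ⟨0, hq⟩)).trans
    (domNum_subdiv_innerEdgesExcept_le _)) hle

end Spider

theorem stmt10 (q : ℕ) (hq : 1 ≤ q) :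
    ∃ (n : ℕ) (T : SimpleGraph (Fin n)), T.IsTree ∧ T.IsQCritical q := by
  refine ⟨2 * q + 1, Spider.graph q, Spider.graph_isTree, fun F hF hcard => ?_,
    Spider.innerEdgesExcept ⟨0, hq⟩, Spider.innerEdgesExcept_subset_edgeSet _,
    Spider.card_innerEdgesExcept _, ?_⟩
  · exact (Spider.domNum_graph hq).trans_lt (Spider.lt_domNum_subdiv hF hcard)
  · exact le_antisymm
      ((Spider.domNum_subdiv_innerEdgesExcept_le _).trans (Spider.domNum_graph hq).ge)
      (domNum_le_domNum_subdiv (Spider.innerEdgesExcept_subset_edgeSet _))
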